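/- Let n ∈ ℕ, d ∈ ℕ₀, let K ⊆ ℝⁿ be closed with nonempty interior, and let S ⊆ Pos(K)_{≤2d}. Define the linear functional l : ℝ[x₁,…,xₙ]_{≤2d} → ℝ by l(p) := ∫_K p(x)·e^{−‖x‖²} dx, let f be a polynomial in the interior (taken inside ℝ[x₁,…,xₙ]_{≤2d}) of Σℝ[x₁,…,xₙ]_{≤d}², and define A : ℝ[x₁,…,xₙ]_{≤2d} → ℝ[x₁,…,xₙ]_{≤2d} by Ap := l(p)·f. Then there exists τ ≥ 0 such that e^{tA}S ⊆ Σℝ[x₁,…,xₙ]_{≤d}² for all t ≥ τ. -/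

import Mathlib

open MvPolynomial Module

/-- Operator exponential `e^A` of an endomorphism of a finite-dimensional real vector
space, `e^A = ∑_{k≥0} A^k/k!`, realized through the matrix exponential in a basis. -/
noncomputable def endExp {M : Type*} [AddCommGroup M] [Module ℝ M] [FiniteDimensional ℝ M]
    (A : Module.End ℝ M) : Module.End ℝ M :=
  (Matrix.toLin (Module.finBasis ℝ M) (Module.finBasis ℝ M))
    (NormedSpace.exp ((LinearMap.toMatrix (Module.finBasis ℝ M) (Module.finBasis ℝ M)) A))

/-- The interior of a subset of a finite-dimensional real vector space with respect to its
standard (unique Hausdorff vector space) topology, transported through coordinates. -/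
noncomputable def interiorIn {M : Type*} [AddCommGroup M] [Module ℝ M] [FiniteDimensional ℝ M]
    (C : Set M) : Set M :=
  (Module.finBasis ℝ M).equivFun ⁻¹' interior ((Module.finBasis ℝ M).equivFun '' C)

/-- `Pos n K`: polynomials in `n` variables that are nonnegative on `K ⊆ ℝⁿ`. -/
def Pos (n : ℕ) (K : Set (Fin n → ℝ)) : Set (MvPolynomial (Fin n) ℝ) :=
  {p | ∀ x ∈ K, 0 ≤ eval x p}

/-- `SOSle n d`: finite sums of squares of polynomials of total degree at most `d`. -/
def SOSle (n d : ℕ) : Set (MvPolynomial (Fin n) ℝ) :=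
  {p | ∃ (m : ℕ) (q : Fin m → MvPolynomial (Fin n) ℝ),
    (∀ i, (q i).totalDegree ≤ d) ∧ p = ∑ i, q i ^ 2}

open MeasureTheory


/-! The operator `A p = l(p) • f` has rank one and satisfies `A² = l(f) • A`, so
`e^{tA} p = p + ((e^{t l(f)} - 1) / l(f)) l(p) • f`. A nonzero polynomial that is nonnegative on `K`
is positive on some open subset of the interior of `K`, so `l` is strictly positive on the closed
cone `Pos(K) \ {0}` and, by compactness of the unit sphere, `l(p) ≥ δ ‖p‖` there. As `f` is an
interior point of the sums-of-squares cone, `p + r • f` is a sum of squares once `r ≥ R ‖p‖`, and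
the coefficient of `f` above is at least `t δ ‖p‖`. -/

section BanachAlgebra

variable {𝔸 : Type*} [NormedRing 𝔸] [NormedAlgebra ℝ 𝔸] [CompleteSpace 𝔸]

open scoped Nat in
theorem NormedSpace.exp_smul_of_isIdempotentElem {Q : 𝔸} (hQ : IsIdempotentElem Q) (s : ℝ) :
    NormedSpace.exp (s • Q) = 1 + (Real.exp s - 1) • Q := by
  have hterm : ∀ k : ℕ, (k !⁻¹ : ℝ) • (s • Q) ^ k =
      (s ^ k / k !) • Q + if k = 0 then 1 - Q else 0 := by
    rintro (_ | k)
    · simp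
    · simp [smul_pow, hQ.pow_succ_eq, smul_smul, div_eq_inv_mul]
  have hsum : HasSum (fun k : ℕ => (s ^ k / k !) • Q + if k = 0 then 1 - Q else 0)
      (Real.exp s • Q + (1 - Q)) :=
    ((Real.exp_eq_exp_ℝ ▸ NormedSpace.expSeries_div_hasSum_exp s).smul_const Q).add
      (hasSum_ite_eq 0 (1 - Q))
  rw [(NormedSpace.exp_series_hasSum_exp' (𝕂 := ℝ) (s • Q)).unique
    (by simpa only [hterm] using hsum), sub_smul, one_smul]
  abel

theorem NormedSpace.exp_eq_of_mul_self_eq_smul {x : 𝔸} {c : ℝ} (hc : c ≠ 0) (hx : x * x = c • x) :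
    NormedSpace.exp x = 1 + ((Real.exp c - 1) / c) • x := by
  have hQ : IsIdempotentElem (c⁻¹ • x) := by
    rw [IsIdempotentElem, smul_mul_smul_comm, hx, smul_smul, mul_assoc, inv_mul_cancel₀ hc,
      mul_one]
  have := NormedSpace.exp_smul_of_isIdempotentElem hQ c
  rwa [smul_inv_smul₀ hc, smul_smul, ← div_eq_mul_inv] at this

end BanachAlgebra

lemma integrable_pow_mul_exp_neg_sq (k : ℕ) :
    Integrable fun x : ℝ => x ^ k * Real.exp (-x ^ 2) := by
  -- `x ^ (k : ℝ) = x ^ k` holds also for `x < 0`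
  simpa [Real.rpow_natCast] using
    integrable_rpow_mul_exp_neg_mul_sq one_pos (s := k) (by linarith [k.cast_nonneg (α := ℝ)])

lemma integrable_monomial_mul_exp_neg_sum_sq {n : ℕ} (k : Fin n → ℕ) :
    Integrable fun x : Fin n → ℝ => (∏ i, x i ^ k i) * Real.exp (-∑ i, x i ^ 2) := by
  have hprod : (fun x : Fin n → ℝ => (∏ i, x i ^ k i) * Real.exp (-∑ i, x i ^ 2)) =
      fun x => ∏ i, x i ^ k i * Real.exp (-x i ^ 2) := by
    funext x
    rw [Finset.prod_mul_distrib, ← Real.exp_sum, Finset.sum_neg_distrib]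
  rw [hprod]
  exact Integrable.fintype_prod (f := fun i (t : ℝ) => t ^ k i * Real.exp (-t ^ 2))
    fun i => integrable_pow_mul_exp_neg_sq (k i)

lemma integrable_eval_mul_exp_neg_sum_sq {n : ℕ} (p : MvPolynomial (Fin n) ℝ) :
    Integrable fun x : Fin n → ℝ => eval x p * Real.exp (-∑ i, x i ^ 2) := by
  simp_rw [eval_eq', Finset.sum_mul, mul_assoc]
  exact integrable_finsetSum _ fun s _ => (integrable_monomial_mul_exp_neg_sum_sq s).const_mul _

noncomputable def gaussianIntegralOn {n : ℕ} (K : Set (Fin n → ℝ)) :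
    MvPolynomial (Fin n) ℝ →ₗ[ℝ] ℝ where
  toFun p := ∫ x in K, eval x p * Real.exp (-∑ i, x i ^ 2)
  map_add' p q := by
    simp only [map_add, add_mul]
    exact integral_add (integrable_eval_mul_exp_neg_sum_sq p).integrableOn
      (integrable_eval_mul_exp_neg_sum_sq q).integrableOn
  map_smul' a p := by
    simp only [smul_eval, mul_assoc, RingHom.id_apply, smul_eq_mul]
    exact integral_const_mul a _

lemma MvPolynomial.eq_zero_of_eval_eq_zero_of_isOpen {σ : Type*} [Fintype σ]
    {p : MvPolynomial σ ℝ} {U : Set (σ → ℝ)} (hU : IsOpen U) (hne : U.Nonempty)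
    (h : ∀ x ∈ U, eval x p = 0) : p = 0 := by
  obtain ⟨x₀, hx₀⟩ := hne
  have hzero := (AnalyticOnNhd.eval_mvPolynomial p).eqOn_zero_of_preconnected_of_eventuallyEq_zero
    isPreconnected_univ (Set.mem_univ x₀) (Filter.eventually_of_mem (hU.mem_nhds hx₀) h)
  exact MvPolynomial.funext fun x => by simpa using hzero (Set.mem_univ x)

lemma setIntegral_pos_of_mem_interior {X : Type*} [TopologicalSpace X] [MeasurableSpace X]
    [OpensMeasurableSpace X] {μ : Measure X} [μ.IsOpenPosMeasure] {s : Set X} {g : X → ℝ}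
    (hs : MeasurableSet s) (hg : Continuous g) (hgs : IntegrableOn g s μ)
    (hg0 : ∀ x ∈ s, 0 ≤ g x) {x : X} (hx : x ∈ interior s) (hgx : g x ≠ 0) :
    0 < ∫ y in s, g y ∂μ := by
  rw [setIntegral_pos_iff_support_of_nonneg_ae (ae_restrict_of_forall_mem hs hg0) hgs]
  exact ((isOpen_interior.inter hg.isOpen_support).measure_pos μ ⟨x, hx, hgx⟩).trans_le
    (measure_mono fun y hy => ⟨hy.2, interior_subset hy.1⟩)

lemma gaussianIntegralOn_pos {n : ℕ} {K : Set (Fin n → ℝ)} (hK : MeasurableSet K)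
    (hKint : (interior K).Nonempty) {p : MvPolynomial (Fin n) ℝ} (hp : p ∈ Pos n K)
    (hp0 : p ≠ 0) : 0 < gaussianIntegralOn K p := by
  obtain ⟨x, hxK, hx⟩ : ∃ x ∈ interior K, eval x p ≠ 0 := by
    by_contra! h
    exact hp0 (eq_zero_of_eval_eq_zero_of_isOpen isOpen_interior hKint h)
  exact setIntegral_pos_of_mem_interior hK
    ((continuous_eval p).mul (by fun_prop))
    (integrable_eval_mul_exp_neg_sum_sq p).integrableOn
    (fun y hy => mul_nonneg (hp y hy) (Real.exp_pos _).le) hxK (mul_ne_zero hx (Real.exp_pos _).ne')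

lemma smul_mem_SOSle {n d : ℕ} {p : MvPolynomial (Fin n) ℝ} (hp : p ∈ SOSle n d) {c : ℝ}
    (hc : 0 ≤ c) : c • p ∈ SOSle n d := by
  obtain ⟨m, q, hdeg, rfl⟩ := hp
  refine ⟨m, fun i => Real.sqrt c • q i, fun i => (totalDegree_smul_le _ _).trans (hdeg i), ?_⟩
  simp_rw [Finset.smul_sum, smul_pow, Real.sq_sqrt hc]

lemma SOSle_subset_Pos (n d : ℕ) (K : Set (Fin n → ℝ)) : SOSle n d ⊆ Pos n K := by
  rintro _ ⟨m, q, -, rfl⟩ x -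
  simp_rw [map_sum, map_pow]
  exact Finset.sum_nonneg fun i _ => sq_nonneg _

lemma neg_one_notMem_SOSle (n d : ℕ) : (-1 : MvPolynomial (Fin n) ℝ) ∉ SOSle n d := fun h => by
  have := SOSle_subset_Pos n d Set.univ h 0 trivial
  norm_num at this

section Cone

variable {E : Type*} [NormedAddCommGroup E] [NormedSpace ℝ E] {C : Set E}

lemma exists_add_smul_mem_of_mem_interior (hC : ∀ x ∈ C, ∀ a : ℝ, 0 ≤ a → a • x ∈ C) {f : E}
    (hf : f ∈ interior C) : ∃ R > 0, ∀ (x : E) (r : ℝ), R * ‖x‖ ≤ r → x + r • f ∈ C := by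
  obtain ⟨ε, hε, hball⟩ := Metric.mem_nhds_iff.1 (mem_interior_iff_mem_nhds.1 hf)
  refine ⟨2 / ε, by positivity, fun x r hr => ?_⟩
  rcases ((mul_nonneg (by positivity) (norm_nonneg x)).trans hr).eq_or_lt with rfl | hr0
  · have hx : x = 0 := norm_le_zero_iff.1 <| le_of_mul_le_mul_left (by simpa using hr)
      (by positivity : 0 < 2 / ε)
    simpa [hx] using hC f (interior_subset hf) 0 le_rfl
  · rw [div_mul_eq_mul_div, div_le_iff₀ hε] at hr
    have hmem : f + r⁻¹ • x ∈ C := hball <| by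
      rw [Metric.mem_ball, dist_eq_norm, add_sub_cancel_left, norm_smul, norm_inv,
        Real.norm_of_nonneg hr0.le, inv_mul_lt_iff₀ hr0]
      linarith [mul_pos hr0 hε]
    simpa [smul_add, smul_inv_smul₀ hr0.ne', add_comm] using hC _ hmem r hr0.le

lemma exists_pos_mul_norm_le_of_isClosed [FiniteDimensional ℝ E] (hCcl : IsClosed C)
    (hC : ∀ x ∈ C, ∀ a : ℝ, 0 ≤ a → a • x ∈ C) (l : E →ₗ[ℝ] ℝ)
    (hl : ∀ x ∈ C, x ≠ 0 → 0 < l x) : ∃ δ > 0, ∀ x ∈ C, δ * ‖x‖ ≤ l x := by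
  obtain ⟨δ, hδ, hδT⟩ := ((isCompact_sphere (0 : E) 1).inter_left hCcl).exists_forall_le'
    l.continuous_of_finiteDimensional.continuousOn
    fun y hy => hl y hy.1 (ne_zero_of_mem_unit_sphere ⟨y, hy.2⟩)
  refine ⟨δ, hδ, fun x hx => ?_⟩
  rcases eq_or_ne x 0 with rfl | hx0
  · simp
  · have hx' : 0 < ‖x‖ := norm_pos_iff.2 hx0
    have := hδT (‖x‖⁻¹ • x) ⟨hC x hx _ (inv_nonneg.2 hx'.le), by simp [norm_smul, hx'.ne']⟩
    rwa [map_smul, smul_eq_mul, le_inv_mul_iff₀ hx', mul_comm] at this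

end Cone

section FiniteDimensional

variable {M : Type*} [AddCommGroup M] [Module ℝ M] [FiniteDimensional ℝ M]

lemma endExp_eq_of_mul_self_eq_smul {A : Module.End ℝ M} {c : ℝ} (hc : c ≠ 0) (hA : A * A = c • A) :
    endExp A = 1 + ((Real.exp c - 1) / c) • A := by
  set B := LinearMap.toMatrix (Module.finBasis ℝ M) (Module.finBasis ℝ M) A
  have hB : B * B = c • B := by rw [← LinearMap.toMatrix_mul, hA, map_smul]
  have hexp : NormedSpace.exp B = 1 + ((Real.exp c - 1) / c) • B := by
    -- the operator norm `linftyOp` induces the product topology used in `endExp`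
    let _ : NormedRing (Matrix (Fin (finrank ℝ M)) (Fin (finrank ℝ M)) ℝ) :=
      Matrix.linftyOpNormedRing
    let _ : NormedAlgebra ℝ (Matrix (Fin (finrank ℝ M)) (Fin (finrank ℝ M)) ℝ) :=
      Matrix.linftyOpNormedAlgebra
    exact NormedSpace.exp_eq_of_mul_self_eq_smul hc hB
  rw [endExp, hexp, map_add, map_smul, Matrix.toLin_one, Matrix.toLin_toMatrix,
    Module.End.one_eq_id]

lemma endExp_smul_apply_of_forall_apply_eq_smul {A : Module.End ℝ M} {l : M →ₗ[ℝ] ℝ} {f : M}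
    (hA : ∀ p, A p = l p • f) (hf : l f ≠ 0) {t : ℝ} (ht : t ≠ 0) (p : M) :
    endExp (t • A) p = p + ((Real.exp (t * l f) - 1) / l f * l p) • f := by
  have hsq : (t • A) * (t • A) = (t * l f) • (t • A) := by
    ext q
    simp only [Module.End.mul_apply, LinearMap.smul_apply, hA, map_smul, smul_smul]
    ring_nf
  rw [endExp_eq_of_mul_self_eq_smul (mul_ne_zero ht hf) hsq]
  simp only [LinearMap.add_apply, Module.End.one_apply, LinearMap.smul_apply, hA, smul_smul]
  congr 2
  field_simp

lemma interiorIn_subset (C : Set M) : interiorIn C ⊆ C := fun _ hf =>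
  (Module.finBasis ℝ M).equivFun.injective.mem_set_image.1 (interior_subset hf)

lemma exists_add_smul_mem_of_mem_interiorIn {C : Set M}
    (hC : ∀ x ∈ C, ∀ a : ℝ, 0 ≤ a → a • x ∈ C) {f : M} (hf : f ∈ interiorIn C) :
    ∃ R > 0, ∀ (x : M) (r : ℝ), R * ‖(Module.finBasis ℝ M).equivFun x‖ ≤ r → x + r • f ∈ C := by
  set e := (Module.finBasis ℝ M).equivFun
  have hcone : ∀ v ∈ e '' C, ∀ a : ℝ, 0 ≤ a → a • v ∈ e '' C := by
    rintro _ ⟨x, hx, rfl⟩ a ha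
    exact ⟨a • x, hC x hx a ha, map_smul e a x⟩
  obtain ⟨R, hR, h⟩ := exists_add_smul_mem_of_mem_interior hcone hf
  refine ⟨R, hR, fun x r hr => ?_⟩
  have := h (e x) r hr
  rwa [← map_smul, ← map_add, e.injective.mem_set_image] at this

lemma exists_pos_mul_norm_le_of_forall_nonneg {ι : Type*} (φ : ι → M →ₗ[ℝ] ℝ)
    (l : M →ₗ[ℝ] ℝ) (hl : ∀ x, x ≠ 0 → (∀ i, 0 ≤ φ i x) → 0 < l x) :
    ∃ δ > 0, ∀ x, (∀ i, 0 ≤ φ i x) → δ * ‖(Module.finBasis ℝ M).equivFun x‖ ≤ l x := by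
  set e := (Module.finBasis ℝ M).equivFun
  set P := {v | ∀ i, 0 ≤ φ i (e.symm v)}
  have hPcl : IsClosed P := by
    simp only [P, Set.ofPred_forall]
    exact isClosed_iInter fun i => isClosed_le continuous_const
      (φ i ∘ₗ e.symm.toLinearMap).continuous_of_finiteDimensional
  have hPcone : ∀ v ∈ P, ∀ a : ℝ, 0 ≤ a → a • v ∈ P := fun v hv a ha i => by
    simpa using mul_nonneg ha (hv i)
  have hPpos : ∀ v ∈ P, v ≠ 0 → 0 < (l ∘ₗ e.symm.toLinearMap) v := fun v hv hv0 => by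
    simpa using hl (e.symm v) (by simpa using hv0) hv
  obtain ⟨δ, hδ, h⟩ := exists_pos_mul_norm_le_of_isClosed hPcl hPcone _ hPpos
  exact ⟨δ, hδ, fun x hx => by simpa [P] using h (e x) (by simpa [P] using hx)⟩

lemma eq_univ_of_zero_mem_interiorIn {C : Set M} (hC : ∀ x ∈ C, ∀ a : ℝ, 0 ≤ a → a • x ∈ C)
    (h0 : (0 : M) ∈ interiorIn C) : C = Set.univ := by
  obtain ⟨R, -, h⟩ := exists_add_smul_mem_of_mem_interiorIn hC h0
  exact Set.eq_univ_of_forall fun x => by simpa using h x _ le_rfl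

theorem exists_forall_endExp_smul_mem {C : Set M} (hC : ∀ x ∈ C, ∀ a : ℝ, 0 ≤ a → a • x ∈ C)
    {f : M} (hf : f ∈ interiorIn C) {l : M →ₗ[ℝ] ℝ} (hlf : 0 < l f) {A : Module.End ℝ M}
    (hA : ∀ p, A p = l p • f) {ι : Type*} (φ : ι → M →ₗ[ℝ] ℝ)
    (hl : ∀ x, x ≠ 0 → (∀ i, 0 ≤ φ i x) → 0 < l x) :
    ∃ τ : ℝ, 0 ≤ τ ∧ ∀ t : ℝ, τ ≤ t → ∀ p, (∀ i, 0 ≤ φ i p) → endExp (t • A) p ∈ C := by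
  obtain ⟨R, hR, hRmem⟩ := exists_add_smul_mem_of_mem_interiorIn hC hf
  obtain ⟨δ, hδ, hδl⟩ := exists_pos_mul_norm_le_of_forall_nonneg φ l hl
  refine ⟨R / δ, by positivity, fun t ht p hp => ?_⟩
  have ht0 : 0 < t := (div_pos hR hδ).trans_le ht
  have hlp := hδl p hp
  have hu : t ≤ (Real.exp (t * l f) - 1) / l f := by
    rw [le_div_iff₀ hlf]
    linarith [Real.add_one_le_exp (t * l f)]
  rw [endExp_smul_apply_of_forall_apply_eq_smul hA hlf.ne' ht0.ne']
  refine hRmem p _ ?_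
  calc R * ‖(Module.finBasis ℝ M).equivFun p‖
      = R / δ * (δ * ‖(Module.finBasis ℝ M).equivFun p‖) := by field_simp
    _ ≤ t * l p := mul_le_mul ht hlp (by positivity) ht0.le
    _ ≤ (Real.exp (t * l f) - 1) / l f * l p :=
      mul_le_mul_of_nonneg_right hu ((by positivity : (0 : ℝ) ≤ _).trans hlp)

end FiniteDimensional

theorem stmt_2_general (n : ℕ) (d : ℕ) (K : Set (Fin n → ℝ))
    (hKcl : IsClosed K) (hKint : (interior K).Nonempty)
    (S : Set (restrictTotalDegree (Fin n) ℝ (2 * d)))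
    (hS : ∀ p ∈ S, (p : MvPolynomial (Fin n) ℝ) ∈ Pos n K)
    (f : restrictTotalDegree (Fin n) ℝ (2 * d))
    (hf : f ∈ interiorIn {q : restrictTotalDegree (Fin n) ℝ (2 * d) |
      (q : MvPolynomial (Fin n) ℝ) ∈ SOSle n d})
    (A : Module.End ℝ (restrictTotalDegree (Fin n) ℝ (2 * d)))
    (hA : ∀ p : restrictTotalDegree (Fin n) ℝ (2 * d),
      A p = (∫ x in K, eval x (p : MvPolynomial (Fin n) ℝ) * Real.exp (-∑ i, x i ^ 2)) • f) :
    ∃ τ : ℝ, 0 ≤ τ ∧ ∀ t : ℝ, τ ≤ t → ∀ p ∈ S,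
      ((endExp (t • A) p : restrictTotalDegree (Fin n) ℝ (2 * d)) :
        MvPolynomial (Fin n) ℝ) ∈ SOSle n d := by
  set sos := {q : restrictTotalDegree (Fin n) ℝ (2 * d) | (q : MvPolynomial (Fin n) ℝ) ∈ SOSle n d}
  have hcone : ∀ q ∈ sos, ∀ a : ℝ, 0 ≤ a → a • q ∈ sos := fun q hq a ha => by
    simpa [sos] using smul_mem_SOSle hq ha
  let l := gaussianIntegralOn K ∘ₗ (restrictTotalDegree (Fin n) ℝ (2 * d)).subtype
  let ev : K → _ := fun x =>
    (aeval x.1).toLinearMap ∘ₗ (restrictTotalDegree (Fin n) ℝ (2 * d)).subtype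
  have hl : ∀ p, p ≠ 0 → (∀ x, 0 ≤ ev x p) → 0 < l p := fun p hp0 hp =>
    gaussianIntegralOn_pos hKcl.measurableSet hKint (fun x hx => hp ⟨x, hx⟩) (by simpa using hp0)
  have hf0 : f ≠ 0 := by
    rintro rfl
    have h1 : (1 : MvPolynomial (Fin n) ℝ) ∈ restrictTotalDegree (Fin n) ℝ (2 * d) := by
      simp [mem_restrictTotalDegree]
    have hneg : (-⟨1, h1⟩ : restrictTotalDegree (Fin n) ℝ (2 * d)) ∈ sos :=
      eq_univ_of_zero_mem_interiorIn hcone hf ▸ Set.mem_univ _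
    exact neg_one_notMem_SOSle n d hneg
  have hfS := interiorIn_subset _ hf
  have hlf : 0 < l f := hl f hf0 fun x => SOSle_subset_Pos n d K hfS x x.2
  obtain ⟨τ, hτ, h⟩ := exists_forall_endExp_smul_mem hcone hf hlf hA ev hl
  exact ⟨τ, hτ, fun t ht p hp => h t ht p fun x => hS p hp x x.2⟩

theorem stmt_2 (n : ℕ) (hn : 0 < n) (d : ℕ) (K : Set (Fin n → ℝ))
    (hKcl : IsClosed K) (hKint : (interior K).Nonempty)
    (S : Set (restrictTotalDegree (Fin n) ℝ (2 * d)))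
    (hS : ∀ p ∈ S, (p : MvPolynomial (Fin n) ℝ) ∈ Pos n K)
    (f : restrictTotalDegree (Fin n) ℝ (2 * d))
    (hf : f ∈ interiorIn {q : restrictTotalDegree (Fin n) ℝ (2 * d) |
      (q : MvPolynomial (Fin n) ℝ) ∈ SOSle n d})
    (A : Module.End ℝ (restrictTotalDegree (Fin n) ℝ (2 * d)))
    (hA : ∀ p : restrictTotalDegree (Fin n) ℝ (2 * d),
      A p = (∫ x in K, eval x (p : MvPolynomial (Fin n) ℝ) * Real.exp (-∑ i, x i ^ 2)) • f) :
    ∃ τ : ℝ, 0 ≤ τ ∧ ∀ t : ℝ, τ ≤ t → ∀ p ∈ S,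
      ((endExp (t • A) p : restrictTotalDegree (Fin n) ℝ (2 * d)) :
        MvPolynomial (Fin n) ℝ) ∈ SOSle n d :=
  stmt_2_general n d K hKcl hKint S hS f hf A hA
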